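/- Let φ = ∀p₁,…,p_k ∃q₁,…,q_l ψ be a quantified Boolean formula where ψ = ψ₁ ∧ … ∧ ψ_m is a CNF over the variables p₁,…,p_k, q₁,…,q_l. Fix a domain containing, as pairwise distinct elements, the variables p_i and q_i, the truth values 0 and 1, names for the clauses ψ₁,…,ψ_m, and fresh constants a₁,…,a_k and a. Define the instance r_φ of a 4-ary relation R to contain (with ψ_{m+1} := ψ₁): the tuple (x, 1, ψ_j, ψ_{j+1}) for every variable x occurring positively in clause ψ_j and the tuple (x, 0, ψ_j, ψ_{j+1}) for every x occurring negatively in ψ_j; the tuples (p_i, 1, a_i, a_i) and (p_i, 0, a_i, a_i) for every i ≤ k; and the tuple (a, a, ψ₁, a). Call S ⊆ r_φ consistent with respect to the FD A → B and the IND C ⊆ D if any two tuples of S agreeing on the first component agree on the second component, and every value occurring as the third component of a tuple of S also occurs as the fourth component of some tuple of S. Then φ is true if and only if the tuple (a, a, ψ₁, a) belongs to every repair of r_φ, i.e., if and only if R(a, a, ψ₁, a) is consistently true in r_φ. (This is the reduction proving that the consistent query answers problem for arbitrary FDs and INDs is Π₂ᵖ-hard.) -/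

import Mathlib

/-- The domain of the Π₂ᵖ-hardness reduction: the universally quantified variables
`p_i`, the existentially quantified variables `q_i`, the truth values `0` and `1`
(`bit`), the clause names `ψ_j` (`cl`), and the fresh constants `a_i` (`A`) and `a`.
All these elements are pairwise distinct. -/
inductive Dom (k l m : ℕ) : Type
  | p (i : Fin k) | q (i : Fin l) | bit (b : Bool) | cl (j : Fin m) | A (i : Fin k) | a
deriving DecidableEq

/-- The instance `r_φ` of the 4-ary relation `R` (with `ψ_{m+1} := ψ₁`): tuples
`(x, 1, ψ_j, ψ_{j+1})` for every variable `x` occurring positively in clause `ψ_j` and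
`(x, 0, ψ_j, ψ_{j+1})` for every `x` occurring negatively in `ψ_j`; tuples
`(p_i, 1, a_i, a_i)` and `(p_i, 0, a_i, a_i)` for every `i ≤ k`; and the tuple
`(a, a, ψ₁, a)`. -/
def qbfInstance (k l m : ℕ) [NeZero m]
    (posP negP : Fin k → Fin m → Prop) (posQ negQ : Fin l → Fin m → Prop) :
    Set (Dom k l m × Dom k l m × Dom k l m × Dom k l m) :=
  {t | (∃ i j, posP i j ∧ t = (.p i, .bit true, .cl j, .cl (j + 1))) ∨
       (∃ i j, negP i j ∧ t = (.p i, .bit false, .cl j, .cl (j + 1))) ∨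
       (∃ i j, posQ i j ∧ t = (.q i, .bit true, .cl j, .cl (j + 1))) ∨
       (∃ i j, negQ i j ∧ t = (.q i, .bit false, .cl j, .cl (j + 1))) ∨
       (∃ i b, t = (.p i, .bit b, .A i, .A i)) ∨
       t = (.a, .a, .cl 0, .a)}

/-- `S` is consistent with respect to the FD `A → B` and the IND `C ⊆ D`. -/
def ConsQBF {k l m : ℕ} (S : Set (Dom k l m × Dom k l m × Dom k l m × Dom k l m)) :
    Prop :=
  (∀ t ∈ S, ∀ t' ∈ S, t.1 = t'.1 → t.2.1 = t'.2.1) ∧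
  (∀ t ∈ S, ∃ t' ∈ S, t'.2.2.2 = t.2.2.1)

section Helpers

variable {k l m : ℕ} [NeZero m]
variable {posP negP : Fin k → Fin m → Prop} {posQ negQ : Fin l → Fin m → Prop}

/-- `S` contains a witness tuple for clause `j`. -/
def Wit (posP negP : Fin k → Fin m → Prop) (posQ negQ : Fin l → Fin m → Prop)
    (S : Set (Dom k l m × Dom k l m × Dom k l m × Dom k l m)) (j : Fin m) : Prop :=
  (∃ i, posP i j ∧ (Dom.p i, Dom.bit true, Dom.cl j, Dom.cl (j+1)) ∈ S) ∨
  (∃ i, negP i j ∧ (Dom.p i, Dom.bit false, Dom.cl j, Dom.cl (j+1)) ∈ S) ∨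
  (∃ i, posQ i j ∧ (Dom.q i, Dom.bit true, Dom.cl j, Dom.cl (j+1)) ∈ S) ∨
  (∃ i, negQ i j ∧ (Dom.q i, Dom.bit false, Dom.cl j, Dom.cl (j+1)) ∈ S)

lemma wit_third {S} {j : Fin m} (h : Wit posP negP posQ negQ S j) :
    ∃ t ∈ S, t.2.2.1 = Dom.cl j := by
  rcases h with ⟨i,_,h⟩|⟨i,_,h⟩|⟨i,_,h⟩|⟨i,_,h⟩ <;> exact ⟨_, h, rfl⟩

lemma wit_fourth {S} {j : Fin m} (h : Wit posP negP posQ negQ S j) :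
    ∃ t ∈ S, t.2.2.2 = Dom.cl (j+1) := by
  rcases h with ⟨i,_,h⟩|⟨i,_,h⟩|⟨i,_,h⟩|⟨i,_,h⟩ <;> exact ⟨_, h, rfl⟩

lemma step {S} (hS : S ⊆ qbfInstance k l m posP negP posQ negQ) (hC : ConsQBF S)
    {j : Fin m} (h : ∃ t ∈ S, t.2.2.1 = Dom.cl j) :
    Wit posP negP posQ negQ S (j - 1) := by
  obtain ⟨t, htS, ht3⟩ := h
  obtain ⟨t', ht'S, ht'⟩ := hC.2 t htS
  rw [ht3] at ht'
  rcases hS ht'S with ⟨i, j', hp, rfl⟩ | ⟨i, j', hp, rfl⟩ | ⟨i, j', hp, rfl⟩ |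
    ⟨i, j', hp, rfl⟩ | ⟨i, b, rfl⟩ | rfl
  · simp only [Dom.cl.injEq] at ht'
    have hj : j' = j - 1 := eq_sub_of_add_eq ht'
    subst hj
    exact Or.inl ⟨i, hp, ht'S⟩
  · simp only [Dom.cl.injEq] at ht'
    have hj : j' = j - 1 := eq_sub_of_add_eq ht'
    subst hj
    exact Or.inr (Or.inl ⟨i, hp, ht'S⟩)
  · simp only [Dom.cl.injEq] at ht'
    have hj : j' = j - 1 := eq_sub_of_add_eq ht'
    subst hj
    exact Or.inr (Or.inr (Or.inl ⟨i, hp, ht'S⟩))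
  · simp only [Dom.cl.injEq] at ht'
    have hj : j' = j - 1 := eq_sub_of_add_eq ht'
    subst hj
    exact Or.inr (Or.inr (Or.inr ⟨i, hp, ht'S⟩))
  · simp at ht'
  · simp at ht'

open Fin.NatCast in
lemma chain {S} (hS : S ⊆ qbfInstance k l m posP negP posQ negQ) (hC : ConsQBF S)
    (h : ∃ t ∈ S, ∃ j0 : Fin m, t.2.2.1 = Dom.cl j0) :
    ∀ j : Fin m, Wit posP negP posQ negQ S j := by
  obtain ⟨t, htS, j0, ht⟩ := h
  have key : ∀ n : ℕ, Wit posP negP posQ negQ S (j0 - 1 - (n : Fin m)) := by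
    intro n
    induction n with
    | zero => simpa using step hS hC ⟨t, htS, ht⟩
    | succ n ih =>
      have h2 := step hS hC (wit_third ih)
      have he : (j0 - 1 - (n : Fin m)) - 1 = j0 - 1 - ((n+1 : ℕ) : Fin m) := by
        push_cast; exact sub_sub _ _ _
      rwa [he] at h2
  intro j
  have := key (j0 - 1 - j).val
  rwa [Fin.cast_val_eq_self, sub_sub_cancel] at this

lemma bit_of_p {t} (h : t ∈ qbfInstance k l m posP negP posQ negQ) {i : Fin k}
    (hp : t.1 = Dom.p i) : ∃ b, t.2.1 = Dom.bit b := by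
  rcases h with ⟨i', j', _, rfl⟩ | ⟨i', j', _, rfl⟩ | ⟨i', j', _, rfl⟩ |
    ⟨i', j', _, rfl⟩ | ⟨i', b, rfl⟩ | rfl
  · exact ⟨true, rfl⟩
  · exact ⟨false, rfl⟩
  · simp at hp
  · simp at hp
  · exact ⟨b, rfl⟩
  · simp at hp

lemma cl_of_q {t} (h : t ∈ qbfInstance k l m posP negP posQ negQ) {i : Fin l}
    (hq : t.1 = Dom.q i) : ∃ j : Fin m, t.2.2.1 = Dom.cl j := by
  rcases h with ⟨i', j', _, rfl⟩ | ⟨i', j', _, rfl⟩ | ⟨i', j', _, rfl⟩ |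
    ⟨i', j', _, rfl⟩ | ⟨i', b, rfl⟩ | rfl
  · simp at hq
  · simp at hq
  · exact ⟨j', rfl⟩
  · exact ⟨j', rfl⟩
  · simp at hq
  · simp at hq

lemma eq_special {t} (h : t ∈ qbfInstance k l m posP negP posQ negQ)
    (ha : t.1 = Dom.a) : t = (Dom.a, Dom.a, Dom.cl 0, Dom.a) := by
  rcases h with ⟨i', j', _, rfl⟩ | ⟨i', j', _, rfl⟩ | ⟨i', j', _, rfl⟩ |
    ⟨i', j', _, rfl⟩ | ⟨i', b, rfl⟩ | rfl
  all_goals first | rfl | simp at ha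

lemma insertable {S} (hS : S ⊆ qbfInstance k l m posP negP posQ negQ) (hC : ConsQBF S)
    (hMax : ∀ S', S' ⊆ qbfInstance k l m posP negP posQ negQ → ConsQBF S' → S ⊆ S' → S' = S)
    {t0} (ht0 : t0 ∈ qbfInstance k l m posP negP posQ negQ)
    (hFD : ∀ t ∈ S, t.1 = t0.1 → t.2.1 = t0.2.1)
    (hIND : ∃ t' ∈ insert t0 S, t'.2.2.2 = t0.2.2.1) : t0 ∈ S := by
  have hsub : insert t0 S ⊆ qbfInstance k l m posP negP posQ negQ :=
    Set.insert_subset_iff.mpr ⟨ht0, hS⟩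
  have hcons : ConsQBF (insert t0 S) := by
    constructor
    · intro t ht t' ht' h
      rcases ht with rfl | ht <;> rcases ht' with rfl | ht'
      · rfl
      · exact (hFD t' ht' h.symm).symm
      · exact hFD t ht h
      · exact hC.1 t ht t' ht' h
    · intro t ht
      rcases ht with rfl | ht
      · exact hIND
      · obtain ⟨t', h', e⟩ := hC.2 t ht
        exact ⟨t', Set.mem_insert_of_mem _ h', e⟩
  rw [← hMax _ hsub hcons (Set.subset_insert _ _)]
  exact Set.mem_insert _ _

end Helpers

/-- The quantified Boolean formula `∀p₁,…,p_k ∃q₁,…,q_l ψ` (with `ψ = ψ₁ ∧ … ∧ ψ_m` a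
CNF) is true iff the tuple `(a, a, ψ₁, a)` belongs to every repair of `r_φ` with
respect to the FD `A → B` and the IND `C ⊆ D`, i.e. iff `R(a, a, ψ₁, a)` is
consistently true in `r_φ`. -/
theorem stmt_11 (k l m : ℕ) [NeZero m]
    (posP negP : Fin k → Fin m → Prop) (posQ negQ : Fin l → Fin m → Prop) :
    (∀ σp : Fin k → Bool, ∃ σq : Fin l → Bool, ∀ j : Fin m,
        (∃ i, posP i j ∧ σp i = true) ∨ (∃ i, negP i j ∧ σp i = false) ∨
        (∃ i, posQ i j ∧ σq i = true) ∨ (∃ i, negQ i j ∧ σq i = false)) ↔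
      ∀ S : Set (Dom k l m × Dom k l m × Dom k l m × Dom k l m),
        S ⊆ qbfInstance k l m posP negP posQ negQ → ConsQBF S →
        (∀ S' : Set (Dom k l m × Dom k l m × Dom k l m × Dom k l m),
          S' ⊆ qbfInstance k l m posP negP posQ negQ → ConsQBF S' → S ⊆ S' → S' = S) →
        (Dom.a, Dom.a, Dom.cl 0, Dom.a) ∈ S := by
  constructor
  · -- φ true → special tuple in every repair
    intro hφ S hS hC hMax
    -- Step 1: every repair fixes a truth value for each p-variable
    have hA : ∀ i : Fin k, ∃ b, (Dom.p i, Dom.bit b, Dom.A i, Dom.A i) ∈ S := by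
      intro i
      by_cases h1 : ∃ b, ∃ t ∈ S, t.2.1 = Dom.bit b ∧ t.1 = Dom.p i
      · obtain ⟨b, t0, ht0S, ht0b, ht0p⟩ := h1
        refine ⟨b, insertable hS hC hMax
          (Or.inr (Or.inr (Or.inr (Or.inr (Or.inl ⟨i, b, rfl⟩))))) ?_ ?_⟩
        · intro t ht h
          have := hC.1 t0 ht0S t ht (ht0p.trans h.symm)
          rw [ht0b] at this
          exact this.symm.trans rfl
        · exact ⟨_, Set.mem_insert _ _, rfl⟩
      · refine ⟨true, insertable hS hC hMax
          (Or.inr (Or.inr (Or.inr (Or.inr (Or.inl ⟨i, true, rfl⟩))))) ?_ ?_⟩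
        · intro t ht h
          obtain ⟨b', hb'⟩ := bit_of_p (hS ht) h
          exact absurd ⟨b', t, ht, hb', h⟩ h1
        · exact ⟨_, Set.mem_insert _ _, rfl⟩
    choose σp hσp using hA
    obtain ⟨σq, hσq⟩ := hφ σp
    by_cases hcl : ∃ t ∈ S, ∃ j : Fin m, t.2.2.1 = Dom.cl j
    · -- S already contains a full cycle of clause tuples
      have hall := chain hS hC hcl
      obtain ⟨t4, ht4S, ht4⟩ := wit_fourth (hall ((0 : Fin m) - 1))
      rw [sub_add_cancel] at ht4
      refine insertable hS hC hMax (Or.inr (Or.inr (Or.inr (Or.inr (Or.inr rfl))))) ?_ ?_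
      · intro t ht h
        rw [eq_special (hS ht) h]
      · exact ⟨t4, Set.mem_insert_of_mem _ ht4S, ht4⟩
    · -- S contains no clause tuples: add the special tuple and a full cycle of witnesses
      push_neg at hcl
      have hw : ∀ j : Fin m, ∃ t : Dom k l m × Dom k l m × Dom k l m × Dom k l m,
          t ∈ qbfInstance k l m posP negP posQ negQ ∧ t.2.2.1 = Dom.cl j ∧
          t.2.2.2 = Dom.cl (j+1) ∧
          ((∃ i, t.1 = Dom.p i ∧ t.2.1 = Dom.bit (σp i)) ∨
           (∃ i, t.1 = Dom.q i ∧ t.2.1 = Dom.bit (σq i))) := by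
        intro j
        rcases hσq j with ⟨i, hp, hb⟩ | ⟨i, hp, hb⟩ | ⟨i, hp, hb⟩ | ⟨i, hp, hb⟩
        · exact ⟨(Dom.p i, Dom.bit true, Dom.cl j, Dom.cl (j+1)),
            Or.inl ⟨i, j, hp, rfl⟩, rfl, rfl, Or.inl ⟨i, rfl, by rw [hb]⟩⟩
        · exact ⟨(Dom.p i, Dom.bit false, Dom.cl j, Dom.cl (j+1)),
            Or.inr (Or.inl ⟨i, j, hp, rfl⟩), rfl, rfl, Or.inl ⟨i, rfl, by rw [hb]⟩⟩
        · exact ⟨(Dom.q i, Dom.bit true, Dom.cl j, Dom.cl (j+1)),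
            Or.inr (Or.inr (Or.inl ⟨i, j, hp, rfl⟩)), rfl, rfl, Or.inr ⟨i, rfl, by rw [hb]⟩⟩
        · exact ⟨(Dom.q i, Dom.bit false, Dom.cl j, Dom.cl (j+1)),
            Or.inr (Or.inr (Or.inr (Or.inl ⟨i, j, hp, rfl⟩))), rfl, rfl,
            Or.inr ⟨i, rfl, by rw [hb]⟩⟩
      choose w hwr hw3 hw4 hwb using hw
      set sp : Dom k l m × Dom k l m × Dom k l m × Dom k l m :=
        (Dom.a, Dom.a, Dom.cl 0, Dom.a) with hsp
      set S' := S ∪ insert sp (Set.range w) with hS'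
      have hmem : ∀ t, t ∈ S' ↔ t ∈ S ∨ t = sp ∨ ∃ j, w j = t := by
        intro t
        simp only [hS', Set.mem_union, Set.mem_insert_iff, Set.mem_range]
      have key : ∀ t ∈ S', (∃ i, t.1 = Dom.p i ∧ t.2.1 = Dom.bit (σp i)) ∨
          (∃ i, t.1 = Dom.q i ∧ t.2.1 = Dom.bit (σq i)) ∨
          (t.1 = Dom.a ∧ t.2.1 = Dom.a) := by
        intro t ht
        rw [hmem] at ht
        rcases ht with ht | rfl | ⟨j, rfl⟩
        · rcases hS ht with ⟨i', j', _, rfl⟩ | ⟨i', j', _, rfl⟩ | ⟨i', j', _, rfl⟩ |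
            ⟨i', j', _, rfl⟩ | ⟨i', b, rfl⟩ | rfl
          · exact absurd rfl (hcl _ ht j')
          · exact absurd rfl (hcl _ ht j')
          · exact absurd rfl (hcl _ ht j')
          · exact absurd rfl (hcl _ ht j')
          · exact Or.inl ⟨i', rfl, hC.1 _ ht _ (hσp i') rfl⟩
          · exact absurd rfl (hcl _ ht 0)
        · exact Or.inr (Or.inr ⟨rfl, rfl⟩)
        · rcases hwb j with h | h
          · exact Or.inl h
          · exact Or.inr (Or.inl h)
      have hsub : S' ⊆ qbfInstance k l m posP negP posQ negQ := by
        intro t ht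
        rw [hmem] at ht
        rcases ht with ht | rfl | ⟨j, rfl⟩
        · exact hS ht
        · exact Or.inr (Or.inr (Or.inr (Or.inr (Or.inr rfl))))
        · exact hwr j
      have hcons : ConsQBF S' := by
        constructor
        · intro t ht t' ht' h
          rcases key t ht with ⟨i, e1, e2⟩ | ⟨i, e1, e2⟩ | ⟨e1, e2⟩ <;>
            rcases key t' ht' with ⟨i', f1, f2⟩ | ⟨i', f1, f2⟩ | ⟨f1, f2⟩ <;>
            rw [e1, f1] at h <;> rw [e2, f2] <;>
            first
              | rfl
              | (injection h with h; rw [h])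
              | (exfalso; exact absurd h (by simp))
        · intro t ht
          rw [hmem] at ht
          rcases ht with ht | rfl | ⟨j, rfl⟩
          · rcases hS ht with ⟨i', j', _, rfl⟩ | ⟨i', j', _, rfl⟩ | ⟨i', j', _, rfl⟩ |
              ⟨i', j', _, rfl⟩ | ⟨i', b, rfl⟩ | rfl
            · exact absurd rfl (hcl _ ht j')
            · exact absurd rfl (hcl _ ht j')
            · exact absurd rfl (hcl _ ht j')
            · exact absurd rfl (hcl _ ht j')
            · exact ⟨_, (hmem _).mpr (Or.inl ht), rfl⟩
            · exact absurd rfl (hcl _ ht 0)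
          · refine ⟨w ((0 : Fin m) - 1), (hmem _).mpr (Or.inr (Or.inr ⟨_, rfl⟩)), ?_⟩
            rw [hw4, sub_add_cancel]
          · refine ⟨w (j - 1), (hmem _).mpr (Or.inr (Or.inr ⟨_, rfl⟩)), ?_⟩
            rw [hw4, sub_add_cancel, hw3]
      have heq := hMax S' hsub hcons (fun t ht => (hmem t).mpr (Or.inl ht))
      rw [← heq]
      exact (hmem sp).mpr (Or.inr (Or.inl rfl))
  · -- special tuple in every repair → φ true
    intro hR σp
    by_contra hno
    classical
    set S : Set (Dom k l m × Dom k l m × Dom k l m × Dom k l m) :=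
      {t | ∃ i : Fin k, t = (Dom.p i, Dom.bit (σp i), Dom.A i, Dom.A i)} with hSdef
    have hSr : S ⊆ qbfInstance k l m posP negP posQ negQ := by
      rintro t ⟨i, rfl⟩
      exact Or.inr (Or.inr (Or.inr (Or.inr (Or.inl ⟨i, σp i, rfl⟩))))
    have hCons : ConsQBF S := by
      constructor
      · rintro t ⟨i, rfl⟩ t' ⟨i', rfl⟩ h
        simp only [Dom.p.injEq] at h
        rw [h]
      · rintro t ⟨i, rfl⟩
        exact ⟨_, ⟨i, rfl⟩, rfl⟩
    have hMaxS : ∀ S', S' ⊆ qbfInstance k l m posP negP posQ negQ → ConsQBF S' →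
        S ⊆ S' → S' = S := by
      intro S' hS'r hC' hsub
      by_cases hcl' : ∃ t ∈ S', ∃ j : Fin m, t.2.2.1 = Dom.cl j
      · exfalso
        apply hno
        have hall := chain hS'r hC' hcl'
        refine ⟨fun i => if (∃ t ∈ S', t.1 = Dom.q i ∧ t.2.1 = Dom.bit true)
          then true else false, fun j => ?_⟩
        rcases hall j with ⟨i, hp, hmem⟩ | ⟨i, hp, hmem⟩ | ⟨i, hp, hmem⟩ | ⟨i, hp, hmem⟩
        · left
          refine ⟨i, hp, ?_⟩
          have hA' : (Dom.p i, Dom.bit (σp i), Dom.A i, Dom.A i) ∈ S' := hsub ⟨i, rfl⟩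
          have := hC'.1 _ hmem _ hA' rfl
          simpa using this.symm
        · right; left
          refine ⟨i, hp, ?_⟩
          have hA' : (Dom.p i, Dom.bit (σp i), Dom.A i, Dom.A i) ∈ S' := hsub ⟨i, rfl⟩
          have := hC'.1 _ hmem _ hA' rfl
          simpa using this.symm
        · right; right; left
          refine ⟨i, hp, ?_⟩
          show (if (∃ t ∈ S', t.1 = Dom.q i ∧ t.2.1 = Dom.bit true) then true else false) = true
          rw [if_pos ⟨_, hmem, rfl, rfl⟩]
        · right; right; right
          refine ⟨i, hp, ?_⟩
          show (if (∃ t ∈ S', t.1 = Dom.q i ∧ t.2.1 = Dom.bit true) then true else false) = false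
          rw [if_neg]
          rintro ⟨t, htS', ht1, ht2⟩
          have := hC'.1 t htS' _ hmem ht1
          rw [ht2] at this
          simp at this
      · apply Set.Subset.antisymm _ hsub
        intro t ht
        rcases hS'r ht with ⟨i', j', _, rfl⟩ | ⟨i', j', _, rfl⟩ | ⟨i', j', _, rfl⟩ |
          ⟨i', j', _, rfl⟩ | ⟨i', b, rfl⟩ | rfl
        · exact absurd ⟨_, ht, j', rfl⟩ hcl'
        · exact absurd ⟨_, ht, j', rfl⟩ hcl'
        · exact absurd ⟨_, ht, j', rfl⟩ hcl'
        · exact absurd ⟨_, ht, j', rfl⟩ hcl'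
        · have hA' : (Dom.p i', Dom.bit (σp i'), Dom.A i', Dom.A i') ∈ S' := hsub ⟨i', rfl⟩
          have := hC'.1 _ ht _ hA' rfl
          have hb : b = σp i' := by simpa using this
          exact ⟨i', by rw [hb]⟩
        · exact absurd ⟨_, ht, 0, rfl⟩ hcl'
    have hmem := hR S hSr hCons hMaxS
    obtain ⟨i, hi⟩ := hmem
    simp at hi
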